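/- arXiv:2206.05858 — 2 statements merged into one kernel-verified Lean document; each statement's English description precedes it below -/
import Mathlib

section
/- The family of altered Legendre polynomials {A_n : n ≥ 1} is total in L²(0,1): the linear span of the functions A_n restricted to [0,1] is dense in L²(0,1). -/
open Polynomial MeasureTheory Real Filter

/-- The Legendre polynomial of degree `n`, via the Rodrigues formula
`P_n(x) = 1/(2^n n!) dⁿ/dxⁿ (x² - 1)ⁿ`. -/
noncomputable def legendre (n : ℕ) : Polynomial ℝ :=
  (1 / (2 ^ n * n.factorial) : ℝ) • derivative^[n] ((X ^ 2 - 1) ^ n)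

/-- The shifted Legendre polynomial `P̃_n(x) = P_n(2x - 1)` on `[0,1]`. -/
noncomputable def shiftedLegendre (n : ℕ) (x : ℝ) : ℝ :=
  (legendre n).eval (2 * x - 1)

/-- The altered Legendre polynomial `A_n(x) = ((x+1)/2) P̃_{n-1}(x)` for `n ≥ 1`. -/
noncomputable def alteredLegendre (n : ℕ) (x : ℝ) : ℝ :=
  ((x + 1) / 2) * shiftedLegendre (n - 1) x

/-!
If `g ∈ L²(0,1)` is orthogonal to every `A_{k+1}`, then `H(x) = (x+1)/2 · g(x)` is orthogonal
to every `P̃_k`. Since `P̃_k` has degree `k`, these span all polynomials, so every moment of `H`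
vanishes; by Weierstrass approximation `H` integrates to zero against every continuous function,
hence `H = 0` a.e., and `g = 0` because `(x+1)/2 > 0` on `(0,1)`.
-/

theorem degree_legendre (n : ℕ) : (legendre n).degree = n := by
  have hmonic : ((X ^ 2 - 1 : ℝ[X]) ^ n).Monic := (monic_X_pow_sub_C (1 : ℝ) two_ne_zero).pow n
  have hdeg : ((X ^ 2 - 1 : ℝ[X]) ^ n).natDegree = n + n := by
    rw [natDegree_pow, ← C_1, natDegree_X_pow_sub_C]; ring
  have hlead : ((X ^ 2 - 1 : ℝ[X]) ^ n).coeff (n + n) = 1 := hdeg ▸ hmonic.coeff_natDegree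
  apply degree_eq_of_le_of_coeff_ne_zero
  · refine (degree_smul_le _ _).trans ((degree_le_natDegree).trans ?_)
    exact_mod_cast (natDegree_iterate_derivative _ _).trans (by omega)
  · rw [legendre, coeff_smul, coeff_iterate_derivative, hlead]
    simp [Nat.descFactorial_eq_zero_iff_lt, Nat.factorial_ne_zero]

-- Mathlib's `Polynomial.shiftedLegendre n` is `(-1)ⁿ` times this polynomial.
noncomputable def shiftedLegendreSeq : Sequence ℝ where
  elems' n := (legendre n).comp (2 * X - 1)
  degree_eq' n := by
    have hlin : (2 * X - 1 : ℝ[X]).degree = 1 := by compute_degree!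
    rw [degree_comp (by rw [hlin]; exact zero_lt_one), hlin, degree_legendre, mul_one]

theorem eval_shiftedLegendreSeq (n : ℕ) (x : ℝ) :
    (shiftedLegendreSeq n).eval x = _root_.shiftedLegendre n x := by
  simp [shiftedLegendreSeq, _root_.shiftedLegendre, eval_comp]

theorem span_range_shiftedLegendreSeq :
    Submodule.span ℝ (Set.range shiftedLegendreSeq) = ⊤ :=
  shiftedLegendreSeq.span fun n => (leadingCoeff_ne_zero.mpr (shiftedLegendreSeq.ne_zero n)).isUnit

theorem continuous_alteredLegendre (n : ℕ) : Continuous (alteredLegendre n) := by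
  unfold alteredLegendre _root_.shiftedLegendre; fun_prop

section PolynomialMoments

variable {μ : Measure ℝ} {s : Set ℝ} {a b : ℝ} {H : ℝ → ℝ}

theorem setIntegral_eval_mul_eq_zero_of_span_eq_top (hs : MeasurableSet s)
    (hsab : s ⊆ Set.Icc a b) (hH : IntegrableOn H s μ) {P : Set ℝ[X]}
    (hP : Submodule.span ℝ P = ⊤) (h : ∀ p ∈ P, ∫ x in s, p.eval x * H x ∂μ = 0) (p : ℝ[X]) :
    ∫ x in s, p.eval x * H x ∂μ = 0 := by
  have hint (q : ℝ[X]) : IntegrableOn (fun x => q.eval x * H x) s μ :=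
    hH.continuousOn_mul_of_subset q.continuous.continuousOn isCompact_Icc hs hsab
  induction (hP ▸ Submodule.mem_top : p ∈ Submodule.span ℝ P) using Submodule.span_induction with
  | mem q hq => exact h q hq
  | zero => simp
  | add q r _ _ hq hr =>
    simp only [eval_add, add_mul]
    rw [integral_add (hint q) (hint r), hq, hr, add_zero]
  | smul c q _ hq =>
    simp only [eval_smul, smul_eq_mul, mul_assoc]
    rw [integral_const_mul, hq, mul_zero]

theorem setIntegral_mul_eq_zero_of_forall_polynomial (hs : MeasurableSet s)
    (hsab : s ⊆ Set.Icc a b) (hH : IntegrableOn H s μ)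
    (h : ∀ p : ℝ[X], ∫ x in s, p.eval x * H x ∂μ = 0) {φ : ℝ → ℝ}
    (hφ : ContinuousOn φ (Set.Icc a b)) : ∫ x in s, φ x * H x ∂μ = 0 := by
  have hint {ψ : ℝ → ℝ} (hψ : ContinuousOn ψ (Set.Icc a b)) :
      IntegrableOn (fun x => ψ x * H x) s μ :=
    hH.continuousOn_mul_of_subset hψ isCompact_Icc hs hsab
  set C := ∫ x in s, ‖H x‖ ∂μ
  have hC : 0 ≤ C := integral_nonneg fun _ => norm_nonneg _
  refine abs_nonpos_iff.mp (le_of_forall_pos_le_add fun ε hε => ?_)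
  obtain ⟨p, hp⟩ := exists_polynomial_near_of_continuousOn a b φ hφ (ε / (C + 1)) (by positivity)
  calc |∫ x in s, φ x * H x ∂μ| = |∫ x in s, (φ x - p.eval x) * H x ∂μ| := by
        simp_rw [sub_mul]
        rw [integral_sub (hint hφ) (hint p.continuous.continuousOn), h p, sub_zero]
    _ ≤ ∫ x in s, ε / (C + 1) * ‖H x‖ ∂μ := by
        rw [← Real.norm_eq_abs]
        refine norm_integral_le_of_norm_le (hH.norm.const_mul _)
          (ae_restrict_of_forall_mem hs fun x hx => ?_)
        rw [norm_mul, Real.norm_eq_abs, abs_sub_comm]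
        gcongr
        exact (hp x (hsab hx)).le
    _ = ε / (C + 1) * C := integral_const_mul _ _
    _ ≤ 0 + ε := by
        rw [zero_add, div_mul_eq_mul_div, div_le_iff₀ (by positivity)]
        nlinarith

theorem ae_restrict_eq_zero_of_forall_polynomial (hs : MeasurableSet s)
    (hsab : s ⊆ Set.Icc a b) (hH : IntegrableOn H s μ)
    (h : ∀ p : ℝ[X], ∫ x in s, p.eval x * H x ∂μ = 0) : ∀ᵐ x ∂μ.restrict s, H x = 0 :=
  ae_eq_zero_of_integral_contDiff_smul_eq_zero hH.locallyIntegrable fun _ hφ _ =>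
    setIntegral_mul_eq_zero_of_forall_polynomial hs hsab hH h hφ.continuous.continuousOn

end PolynomialMoments

theorem ContinuousOn.memLp_restrict_of_isCompact {α E : Type*} [TopologicalSpace α]
    [MeasurableSpace α] [OpensMeasurableSpace α] [NormedAddCommGroup E]
    [SecondCountableTopologyEither α E] {μ : Measure α}
    {K s : Set α} [IsFiniteMeasure (μ.restrict s)] {f : α → E} (hf : ContinuousOn f K)
    (hK : IsCompact K) (hs : MeasurableSet s) (hsK : s ⊆ K) (p : ENNReal) :
    MemLp f p (μ.restrict s) := by
  obtain ⟨C, hC⟩ := hK.exists_bound_of_continuousOn hf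
  exact MemLp.of_bound ((hf.mono hsK).aestronglyMeasurable hs) C
    (ae_restrict_of_forall_mem hs fun x hx => hC x (hsK hx))

theorem integral_mul_eq_zero_of_toLp_mem_orthogonal {α : Type*} [MeasurableSpace α]
    {μ : Measure α} {K : Submodule ℝ (Lp ℝ 2 μ)} {g : Lp ℝ 2 μ} (hg : g ∈ Kᗮ) {F : α → ℝ}
    (hF : MemLp F 2 μ) (hFK : hF.toLp F ∈ K) : ∫ x, F x * g x ∂μ = 0 := by
  rw [← (Submodule.mem_orthogonal K g).mp hg _ hFK, L2.inner_def]
  refine integral_congr_ae ?_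
  filter_upwards [hF.coeFn_toLp] with x hx
  simp [hx, mul_comm]

/-- The altered Legendre polynomials `{A_n : n ≥ 1}` are total in `L²(0,1)`. -/
theorem alteredLegendre_total :
    Dense (↑(Submodule.span ℝ
      {f : Lp ℝ 2 (volume.restrict (Set.Ioo (0:ℝ) 1)) |
        ∃ n : ℕ, 1 ≤ n ∧
          (f : ℝ → ℝ) =ᵐ[volume.restrict (Set.Ioo (0:ℝ) 1)] alteredLegendre n}) :
      Set (Lp ℝ 2 (volume.restrict (Set.Ioo (0:ℝ) 1)))) := by
  rw [Submodule.dense_iff_topologicalClosure_eq_top, Submodule.topologicalClosure_eq_top_iff,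
    Submodule.eq_bot_iff]
  intro g hg
  set H : ℝ → ℝ := fun x => (x + 1) / 2 * g x
  have hH : IntegrableOn H (Set.Ioo 0 1) :=
    IntegrableOn.continuousOn_mul_of_subset (by fun_prop) ((Lp.memLp g).integrable one_le_two)
      isCompact_Icc measurableSet_Ioo Set.Ioo_subset_Icc_self
  have hH0 : ∀ᵐ x ∂volume.restrict (Set.Ioo 0 1), H x = 0 := by
    refine ae_restrict_eq_zero_of_forall_polynomial measurableSet_Ioo Set.Ioo_subset_Icc_self hH
      (setIntegral_eval_mul_eq_zero_of_span_eq_top measurableSet_Ioo Set.Ioo_subset_Icc_self hH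
        span_range_shiftedLegendreSeq ?_)
    rintro _ ⟨k, rfl⟩
    have hA : MemLp (alteredLegendre (k + 1)) 2 (volume.restrict (Set.Ioo 0 1)) :=
      (continuous_alteredLegendre (k + 1)).continuousOn.memLp_restrict_of_isCompact
        isCompact_Icc measurableSet_Ioo Set.Ioo_subset_Icc_self 2
    refine (integral_congr_ae (ae_of_all _ fun x => ?_)).trans
      (integral_mul_eq_zero_of_toLp_mem_orthogonal hg hA
        (Submodule.subset_span ⟨k + 1, le_add_self, hA.coeFn_toLp⟩))
    simp only [H, alteredLegendre, eval_shiftedLegendreSeq, Nat.add_sub_cancel]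
    ring
  rw [Lp.eq_zero_iff_ae_eq_zero]
  filter_upwards [hH0, ae_restrict_mem measurableSet_Ioo] with x hx hmem
  exact (mul_eq_zero.mp hx).resolve_left (by linarith [hmem.1])
end

section
/- For all integers m, n ≥ 1, the Legendre rational functions satisfy the orthogonality relation ∫₀¹ R_m(x) R_n(x) dx = δ_{mn}/(2(2n−1)). -/
open Polynomial MeasureTheory Real Filter

/-- The proper Legendre rational function `R_n(x) = (-1)^{n-1} A_n((1-x)/(1+x))`. -/
noncomputable def legendreRational (n : ℕ) (x : ℝ) : ℝ :=
  (-1) ^ (n - 1) * alteredLegendre n ((1 - x) / (1 + x))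

/-!
Substituting `y = (1 - 3x)/(1 + x)`, which maps `[0, 1]` onto `[-1, 1]` with
`dy = -4 dx/(1 + x)²`, turns `R_{m+1} R_{n+1} dx` into `(-1)^{m+n}/4 · P_m P_n dy`, so the claim
is the orthogonality of the Legendre polynomials on `[-1, 1]`. For that, the derivatives of
`(x² - 1)ⁿ` of order `< n` vanish at `±1`, so `n` integrations by parts move every derivative in
Rodrigues' formula onto the other factor, which then either vanishes for degree reasons or becomes
the constant `(2n)!`; what remains is `∫ (1 - x²)ⁿ = 2^{2n+1} n!²/(2n+1)!`.
-/

open scoped Nat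

namespace Polynomial

theorem iterate_derivative_natDegree {R : Type*} [Semiring R] (p : R[X]) :
    derivative^[p.natDegree] p = C (p.natDegree ! • p.leadingCoeff) := by
  have hdeg : (derivative^[p.natDegree] p).natDegree = 0 := by
    simpa using natDegree_iterate_derivative p p.natDegree
  rw [eq_C_of_natDegree_eq_zero hdeg, coeff_iterate_derivative, zero_add,
    Nat.descFactorial_self, leadingCoeff]

section RodriguesPolynomial

variable {R : Type*} [CommRing R]

theorem monic_X_sq_sub_one : (X ^ 2 - 1 : R[X]).Monic := by
  simpa using monic_X_pow_sub_C (1 : R) two_ne_zero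

theorem natDegree_X_sq_sub_one_pow [Nontrivial R] (n : ℕ) :
    ((X ^ 2 - 1 : R[X]) ^ n).natDegree = 2 * n := by
  rw [monic_X_sq_sub_one.natDegree_pow, ← C_1, natDegree_X_pow_sub_C, mul_comm]

theorem iterate_derivative_X_sq_sub_one_pow_two_mul [Nontrivial R] (n : ℕ) :
    derivative^[2 * n] ((X ^ 2 - 1 : R[X]) ^ n) = C ((2 * n)! : R) := by
  have h := iterate_derivative_natDegree ((X ^ 2 - 1 : R[X]) ^ n)
  rwa [(monic_X_sq_sub_one.pow n).leadingCoeff, natDegree_X_sq_sub_one_pow, nsmul_one] at h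

theorem eval_iterate_derivative_X_sq_sub_one_pow_eq_zero {n k : ℕ} (hk : k < n) {a : R}
    (ha : a ^ 2 = 1) : (derivative^[k] ((X ^ 2 - 1 : R[X]) ^ n)).eval a = 0 := by
  have hroot : X - C a ∣ (X ^ 2 - 1 : R[X]) := by
    rw [dvd_iff_isRoot]; simp [ha]
  obtain ⟨r, hr⟩ := pow_sub_dvd_iterate_derivative_of_pow_dvd k (pow_dvd_pow_of_dvd hroot n)
  obtain ⟨j, hj⟩ : ∃ j, n - k = j + 1 := ⟨n - k - 1, by omega⟩
  rw [hr, hj, eval_mul, eval_pow, pow_succ, eval_sub, eval_X, eval_C, sub_self, mul_zero, zero_mul]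

end RodriguesPolynomial

theorem integral_eval_mul_derivative {a b : ℝ} (p q : ℝ[X]) (ha : q.eval a = 0)
    (hb : q.eval b = 0) :
    ∫ x in a..b, p.eval x * (derivative q).eval x =
      -∫ x in a..b, (derivative p).eval x * q.eval x := by
  rw [intervalIntegral.integral_mul_deriv_eq_deriv_mul (fun x _ => p.hasDerivAt x)
    (fun x _ => q.hasDerivAt x) ((derivative p).continuous.intervalIntegrable _ _)
    ((derivative q).continuous.intervalIntegrable _ _), ha, hb]
  ring

theorem integral_eval_mul_iterate_derivative {a b : ℝ} (n : ℕ) (p q : ℝ[X])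
    (ha : ∀ k < n, (derivative^[k] q).eval a = 0)
    (hb : ∀ k < n, (derivative^[k] q).eval b = 0) :
    ∫ x in a..b, p.eval x * (derivative^[n] q).eval x =
      (-1) ^ n * ∫ x in a..b, (derivative^[n] p).eval x * q.eval x := by
  induction n generalizing p with
  | zero => simp
  | succ n ih =>
    rw [Function.iterate_succ_apply', integral_eval_mul_derivative _ _ (ha n n.lt_succ_self)
      (hb n n.lt_succ_self), ih _ (fun k hk => ha k (by omega)) (fun k hk => hb k (by omega)),
      ← Function.iterate_succ_apply, pow_succ]
    ring

end Polynomial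

theorem integral_eval_iterate_derivative_X_sq_sub_one_pow_mul (m n : ℕ) :
    ∫ x in (-1 : ℝ)..1, (derivative^[m] ((X ^ 2 - 1 : ℝ[X]) ^ m)).eval x *
        (derivative^[n] ((X ^ 2 - 1 : ℝ[X]) ^ n)).eval x =
      (-1) ^ n * ∫ x in (-1 : ℝ)..1, (derivative^[n + m] ((X ^ 2 - 1 : ℝ[X]) ^ m)).eval x *
        ((X ^ 2 - 1 : ℝ[X]) ^ n).eval x := by
  rw [integral_eval_mul_iterate_derivative n _ _
    (fun k hk => eval_iterate_derivative_X_sq_sub_one_pow_eq_zero hk (by norm_num))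
    (fun k hk => eval_iterate_derivative_X_sq_sub_one_pow_eq_zero hk (by norm_num)),
    Function.iterate_add_apply]

theorem integral_eval_iterate_derivative_X_sq_sub_one_pow_mul_of_lt {m n : ℕ} (h : m < n) :
    ∫ x in (-1 : ℝ)..1, (derivative^[m] ((X ^ 2 - 1 : ℝ[X]) ^ m)).eval x *
        (derivative^[n] ((X ^ 2 - 1 : ℝ[X]) ^ n)).eval x = 0 := by
  rw [integral_eval_iterate_derivative_X_sq_sub_one_pow_mul, iterate_derivative_eq_zero
    (by rw [natDegree_X_sq_sub_one_pow]; omega)]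
  simp

theorem integral_eval_iterate_derivative_X_sq_sub_one_pow_sq (n : ℕ) :
    ∫ x in (-1 : ℝ)..1, (derivative^[n] ((X ^ 2 - 1 : ℝ[X]) ^ n)).eval x *
        (derivative^[n] ((X ^ 2 - 1 : ℝ[X]) ^ n)).eval x =
      (2 * n)! * ∫ x in (-1 : ℝ)..1, (1 - x ^ 2) ^ n := by
  have hsign (x : ℝ) : (x ^ 2 - 1) ^ n = (-1) ^ n * (1 - x ^ 2) ^ n := by
    rw [← mul_pow]; ring
  rw [integral_eval_iterate_derivative_X_sq_sub_one_pow_mul, ← two_mul,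
    iterate_derivative_X_sq_sub_one_pow_two_mul]
  simp only [eval_C, eval_pow, eval_sub, eval_X, eval_one, hsign,
    intervalIntegral.integral_const_mul]
  have hsq : ((-1 : ℝ) ^ n) * (-1) ^ n = 1 := by rw [← mul_pow]; norm_num
  linear_combination ((2 * n)! * ∫ x in (-1 : ℝ)..1, (1 - x ^ 2) ^ n) * hsq

theorem integral_one_sub_sq_pow_succ (n : ℕ) :
    (2 * n + 3 : ℝ) * ∫ x in (-1 : ℝ)..1, (1 - x ^ 2) ^ (n + 1) =
      (2 * n + 2) * ∫ x in (-1 : ℝ)..1, (1 - x ^ 2) ^ n := by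
  -- `(1 - x²)ⁿ⁺¹ - 2(n + 1) x² (1 - x²)ⁿ`, rewritten using `x² = 1 - (1 - x²)`.
  have hderiv (x : ℝ) : HasDerivAt (fun x : ℝ => x * (1 - x ^ 2) ^ (n + 1))
      ((2 * n + 3) * (1 - x ^ 2) ^ (n + 1) - (2 * n + 2) * (1 - x ^ 2) ^ n) x := by
    refine ((hasDerivAt_id x).fun_mul
      (((hasDerivAt_pow 2 x).const_sub 1).fun_pow (n + 1))).congr_deriv ?_
    simp only [id, Nat.add_sub_cancel]
    push_cast; ring
  have hFTC := intervalIntegral.integral_eq_sub_of_hasDerivAt (fun x _ => hderiv x)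
    (Continuous.intervalIntegrable (by fun_prop) (-1) 1)
  rw [intervalIntegral.integral_sub (Continuous.intervalIntegrable (by fun_prop) _ _)
    (Continuous.intervalIntegrable (by fun_prop) _ _), intervalIntegral.integral_const_mul,
    intervalIntegral.integral_const_mul] at hFTC
  norm_num at hFTC
  linarith

theorem integral_one_sub_sq_pow (n : ℕ) :
    ∫ x in (-1 : ℝ)..1, (1 - x ^ 2) ^ n = 2 ^ (2 * n + 1) * (n ! : ℝ) ^ 2 / (2 * n + 1)! := by
  induction n with
  | zero => norm_num
  | succ n ih =>
    have hrec := integral_one_sub_sq_pow_succ n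
    rw [ih] at hrec
    rw [eq_div_iff (by positivity), show 2 * (n + 1) + 1 = 2 * n + 1 + 1 + 1 by ring,
      Nat.factorial_succ (2 * n + 1 + 1), Nat.factorial_succ (2 * n + 1), Nat.factorial_succ n]
    push_cast at hrec ⊢
    field_simp at hrec
    linear_combination (2 * (n : ℝ) + 2) * hrec

theorem eval_legendre (n : ℕ) (x : ℝ) :
    (legendre n).eval x =
      (2 ^ n * n ! : ℝ)⁻¹ * (derivative^[n] ((X ^ 2 - 1 : ℝ[X]) ^ n)).eval x := by
  rw [legendre, eval_smul, smul_eq_mul, one_div]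

theorem integral_legendre_mul_legendre_of_lt {m n : ℕ} (h : m < n) :
    ∫ x in (-1 : ℝ)..1, (legendre m).eval x * (legendre n).eval x = 0 := by
  simp only [eval_legendre, mul_mul_mul_comm _ (eval _ _), intervalIntegral.integral_const_mul,
    integral_eval_iterate_derivative_X_sq_sub_one_pow_mul_of_lt h, mul_zero]

theorem integral_legendre_mul_legendre (m n : ℕ) :
    ∫ x in (-1 : ℝ)..1, (legendre m).eval x * (legendre n).eval x =
      if m = n then 2 / (2 * n + 1 : ℝ) else 0 := by
  rcases lt_trichotomy m n with h | rfl | h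
  · rw [integral_legendre_mul_legendre_of_lt h, if_neg h.ne]
  · simp only [eval_legendre, mul_mul_mul_comm _ (eval _ _), intervalIntegral.integral_const_mul,
      integral_eval_iterate_derivative_X_sq_sub_one_pow_sq, integral_one_sub_sq_pow, if_true,
      Nat.factorial_succ (2 * m)]
    push_cast
    field_simp
    ring
  · simp_rw [mul_comm (eval _ (legendre m))]
    rw [integral_legendre_mul_legendre_of_lt h, if_neg h.ne']

theorem integral_comp_one_sub_three_mul_div_one_add {g : ℝ → ℝ} (hg : Continuous g) :
    ∫ x in (0 : ℝ)..1, g ((1 - 3 * x) / (1 + x)) / (1 + x) ^ 2 =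
      1 / 4 * ∫ y in (-1 : ℝ)..1, g y := by
  have hpos : ∀ x ∈ Set.uIcc (0 : ℝ) 1, 1 + x ≠ 0 := fun x hx => by
    rw [Set.uIcc_of_le zero_le_one] at hx; linarith [hx.1]
  have hderiv : ∀ x ∈ Set.uIcc (0 : ℝ) 1,
      HasDerivAt (fun x => (1 - 3 * x) / (1 + x)) (-4 / (1 + x) ^ 2) x := fun x hx => by
    refine (((hasDerivAt_id' x).const_mul 3).const_sub 1 |>.div
      ((hasDerivAt_id' x).const_add 1) (hpos x hx)).congr_deriv ?_
    field_simp
    ring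
  have hcont : ContinuousOn (fun x : ℝ => -4 / (1 + x) ^ 2) (Set.uIcc 0 1) :=
    continuousOn_const.div (by fun_prop) fun x hx => pow_ne_zero 2 (hpos x hx)
  have hsubst := intervalIntegral.integral_comp_mul_deriv hderiv hcont hg
  simp only [Function.comp_def] at hsubst
  calc ∫ x in (0 : ℝ)..1, g ((1 - 3 * x) / (1 + x)) / (1 + x) ^ 2
      = ∫ x in (0 : ℝ)..1, -1 / 4 * (g ((1 - 3 * x) / (1 + x)) * (-4 / (1 + x) ^ 2)) :=
        intervalIntegral.integral_congr fun x _ => by field_simp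
    _ = -1 / 4 * ∫ y in (1 : ℝ)..(-1), g y := by
        rw [intervalIntegral.integral_const_mul, hsubst]; norm_num
    _ = 1 / 4 * ∫ y in (-1 : ℝ)..1, g y := by
        rw [intervalIntegral.integral_symm]; ring

theorem legendreRational_succ (n : ℕ) {x : ℝ} (hx : 1 + x ≠ 0) :
    legendreRational (n + 1) x =
      (-1) ^ n * (legendre n).eval ((1 - 3 * x) / (1 + x)) / (1 + x) := by
  have hA : ((1 - x) / (1 + x) + 1) / 2 = 1 / (1 + x) := by field_simp; ring
  have hP : 2 * ((1 - x) / (1 + x)) - 1 = (1 - 3 * x) / (1 + x) := by field_simp; ring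
  rw [legendreRational, alteredLegendre, _root_.shiftedLegendre, Nat.add_sub_cancel, hA, hP]
  ring

theorem integral_legendreRational_mul (m n : ℕ) :
    ∫ x in (0 : ℝ)..1, legendreRational (m + 1) x * legendreRational (n + 1) x =
      (-1) ^ (m + n) / 4 * ∫ y in (-1 : ℝ)..1, (legendre m).eval y * (legendre n).eval y := by
  have hR : ∀ x ∈ Set.uIcc (0 : ℝ) 1,
      legendreRational (m + 1) x * legendreRational (n + 1) x =
        (-1) ^ (m + n) * ((legendre m).eval ((1 - 3 * x) / (1 + x)) *
          (legendre n).eval ((1 - 3 * x) / (1 + x)) / (1 + x) ^ 2) := fun x hx => by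
    rw [Set.uIcc_of_le zero_le_one] at hx
    have hx0 : 1 + x ≠ 0 := by linarith [hx.1]
    rw [legendreRational_succ m hx0, legendreRational_succ n hx0]
    field_simp
    ring
  rw [intervalIntegral.integral_congr hR, intervalIntegral.integral_const_mul,
    integral_comp_one_sub_three_mul_div_one_add
      (g := fun y => (legendre m).eval y * (legendre n).eval y) (by fun_prop)]
  ring

/-- Orthogonality of the Legendre rational functions:
`∫₀¹ R_m(x) R_n(x) dx = δ_{mn}/(2(2n-1))`. -/
theorem legendreRational_orthogonality (m n : ℕ) (hm : 1 ≤ m) (hn : 1 ≤ n) :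
    ∫ x in (0:ℝ)..1, legendreRational m x * legendreRational n x =
      (if m = n then 1 else 0) / (2 * (2 * (n : ℝ) - 1)) := by
  obtain ⟨m, rfl⟩ : ∃ k, m = k + 1 := ⟨m - 1, by omega⟩
  obtain ⟨n, rfl⟩ : ∃ k, n = k + 1 := ⟨n - 1, by omega⟩
  rw [integral_legendreRational_mul, integral_legendre_mul_legendre]
  by_cases h : m = n
  · subst h
    rw [if_pos rfl, if_pos rfl, Even.neg_one_pow ⟨m, rfl⟩,
      show 2 * ((m + 1 : ℕ) : ℝ) - 1 = 2 * m + 1 by push_cast; ring]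
    field_simp
    ring
  · simp [h]
end
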